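/- If q is a nonzero quadratic form on F³ with F = GF(3) and the set Q_0(q) has more than 4 points, then Q_0(q) is the union of two distinct lines of PG(2,3) (and hence has exactly 7 points). -/

import Mathlib

/-- The field `GF(3)`. -/
abbrev F : Type := ZMod 3

/-- The vector space `F³`. -/
abbrev V : Type := Fin 3 → F

/-- The value of a quadratic form `q` at a point of `PG(2,3)`; this is well defined
(independent of the representative) since `q (c • v) = c² • q v = q v` for `c ≠ 0` in `GF(3)`. -/
noncomputable def pval (q : QuadraticForm F V) (X : Projectivization F V) : F := q X.rep

/-- `Q_t(q)`: the set of points `F·x` of `PG(2,3)` with `x ≠ 0` and `q x = t`. -/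
noncomputable def Qset (q : QuadraticForm F V) (t : F) : Set (Projectivization F V) :=
  {X : Projectivization F V | pval q X = t}

/-- A line of `PG(2,3)`: the point set of a two-dimensional subspace of `F³`. -/
def IsLine (ℓ : Set (Projectivization F V)) : Prop :=
  ∃ S : Submodule F V, Module.finrank F S = 2 ∧
    ℓ = {X : Projectivization F V | X.rep ∈ S}

/-! ### Auxiliary fast arithmetic over a custom 3-element type -/

set_option linter.constructorNameAsVariable false in
inductive F3 : Type | z | o | t
deriving DecidableEq

instance : Fintype F3 :=
  ⟨⟨↑[F3.z, F3.o, F3.t], Multiset.coe_nodup.mpr (by decide)⟩, fun x => by cases x <;> decide⟩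

namespace F3
def add : F3 → F3 → F3
  | z, x => x | x, z => x | o, o => t | o, t => z | t, o => z | t, t => o
def mul : F3 → F3 → F3
  | z, _ => z | _, z => z | o, x => x | x, o => x | t, t => o
end F3

abbrev W3 : Type := F3 × F3 × F3
def addW (u v : W3) : W3 := (F3.add u.1 v.1, F3.add u.2.1 v.2.1, F3.add u.2.2 v.2.2)
def smulW (s : F3) (u : W3) : W3 := (F3.mul s u.1, F3.mul s u.2.1, F3.mul s u.2.2)
def zW : W3 := (F3.z, F3.z, F3.z)
def PolW (a b c d e f : F3) (w : W3) : F3 :=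
  F3.add (F3.add (F3.add (F3.mul a (F3.mul w.1 w.1)) (F3.mul b (F3.mul w.2.1 w.2.1)))
    (F3.add (F3.mul c (F3.mul w.2.2 w.2.2)) (F3.mul d (F3.mul w.1 w.2.1))))
    (F3.add (F3.mul e (F3.mul w.1 w.2.2)) (F3.mul f (F3.mul w.2.1 w.2.2)))
def allF3 : List F3 := [F3.z, F3.o, F3.t]
def allW : List W3 :=
  (allF3.flatMap fun x => allF3.flatMap fun y => allF3.map fun w => (x,y,w)).filter (fun w => w ≠ zW)
def inSpB (u1 u2 w : W3) : Bool :=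
  allF3.any fun s => allF3.any fun t => w == addW (smulW s u1) (smulW t u2)
def indB (u1 u2 : W3) : Bool :=
  allF3.all fun s => allF3.all fun t =>
    !(addW (smulW s u1) (smulW t u2) == zW) || (s == F3.z && t == F3.z)
def subZ (p : W3 → F3) (u1 u2 : W3) : Bool :=
  allF3.all fun s => allF3.all fun t => p (addW (smulW s u1) (smulW t u2)) == F3.z
def pick (p : W3 → F3) : W3 × W3 × W3 × W3 :=
  let zs := allW.filter (fun w => p w == F3.z)
  let u1 := zs.headD zW
  let u2 := (zs.find? fun w => !(inSpB u1 zW w) && subZ p u1 w).getD zW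
  let w1 := (zs.find? fun w => !(inSpB u1 u2 w)).getD zW
  let w2 := (zs.find? fun w => !(inSpB u1 u2 w) && !(inSpB w1 zW w) && subZ p w1 w).getD zW
  (u1, u2, w1, w2)
def checkB (p : W3 → F3) : Bool :=
  match pick p with
  | (u1, u2, w1, w2) =>
    indB u1 u2 && indB w1 w2 && !(inSpB w1 w2 u1 && inSpB w1 w2 u2) &&
    (allW.all fun w => (p w == F3.z) == (inSpB u1 u2 w || inSpB w1 w2 w))
def cnt (p : W3 → F3) : Nat := (allW.filter fun w => p w == F3.z).length
def goodB (a b c d e f : F3) : Bool :=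
  (a == F3.z && b == F3.z && c == F3.z && d == F3.z && e == F3.z && f == F3.z) ||
  !(8 < cnt (PolW a b c d e f) : Bool) ||
  ((cnt (PolW a b c d e f) == 14) && checkB (PolW a b c d e f))
def goodAll : Bool := allF3.all fun a => allF3.all fun b => allF3.all fun c =>
  allF3.all fun d => allF3.all fun e => allF3.all fun f => goodB a b c d e f

set_option maxRecDepth 1000000 in
set_option maxHeartbeats 10000000 in
theorem coreBool : goodAll = true := rfl

/-! ### Transfer to `F = ZMod 3` -/

def φ : F3 → F | .z => 0 | .o => 1 | .t => 2
def ψ : F → F3 := fun a => if a = 0 then .z else if a = 1 then .o else .t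
def Φ : W3 → V := fun w => ![φ w.1, φ w.2.1, φ w.2.2]
def Ψ : V → W3 := fun v => (ψ (v 0), ψ (v 1), ψ (v 2))

lemma phi_add : ∀ x y : F3, φ (F3.add x y) = φ x + φ y := by decide
lemma phi_mul : ∀ x y : F3, φ (F3.mul x y) = φ x * φ y := by decide
lemma phi_psi : ∀ a : F, φ (ψ a) = a := by decide
lemma phi_eq_zero : ∀ x : F3, φ x = 0 ↔ x = F3.z := by decide
lemma PhiPsi : ∀ v : V, Φ (Ψ v) = v := by decide
lemma PsiPhi : ∀ w : W3, Ψ (Φ w) = w := by decide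
lemma Phi_inj : Function.Injective Φ := Function.LeftInverse.injective PsiPhi
lemma Phi_zero : Φ zW = 0 := by decide
lemma Phi_add : ∀ u v : W3, Φ (addW u v) = Φ u + Φ v := by decide
lemma Phi_smul : ∀ (s : F3) (u : W3), Φ (smulW s u) = φ s • Φ u := by decide
lemma mem_allF3 : ∀ x : F3, x ∈ allF3 := by intro x; cases x <;> simp [allF3]
lemma mem_allW : ∀ w : W3, w ∈ allW ↔ w ≠ zW := by decide
lemma allW_nodup : allW.Nodup := by decide

def E0 : V := ![1,0,0]
def E1 : V := ![0,1,0]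
def E2 : V := ![0,0,1]

lemma E0_ne : (E0 : V) ≠ 0 := by decide

lemma decompV : ∀ v : V, v = v 0 • E0 + v 1 • E1 + v 2 • E2 := by decide

def PolV (a b c d e f : F) (v : V) : F :=
  a*(v 0*v 0) + b*(v 1*v 1) + c*(v 2*v 2) + d*(v 0*v 1) + e*(v 0*v 2) + f*(v 1*v 2)

lemma expand (q : QuadraticForm F V) (v : V) :
    q v = PolV (q E0) (q E1) (q E2) (QuadraticMap.polar q E0 E1) (QuadraticMap.polar q E0 E2)
      (QuadraticMap.polar q E1 E2) v := by
  conv_lhs => rw [decompV v]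
  rw [QuadraticMap.map_add (⇑q) (v 0 • E0 + v 1 • E1) (v 2 • E2),
    QuadraticMap.map_add (⇑q) (v 0 • E0) (v 1 • E1)]
  simp only [QuadraticMap.map_smul, QuadraticMap.polar_add_left, QuadraticMap.polar_smul_left,
    QuadraticMap.polar_smul_right, smul_eq_mul, PolV]
  ring

lemma Pol_corr (a b c d e f : F3) (w : W3) :
    φ (PolW a b c d e f w) = PolV (φ a) (φ b) (φ c) (φ d) (φ e) (φ f) (Φ w) := by
  obtain ⟨x, y, zz⟩ := w
  simp only [PolW, PolV, Φ, phi_add, phi_mul, Matrix.cons_val_zero, Matrix.cons_val_one,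
    Matrix.head_cons, Matrix.cons_val_two, Matrix.tail_cons]
  ring


lemma Psi_zero : Ψ (0 : V) = zW := by decide
lemma PolW_zero : ∀ w : W3, PolW F3.z F3.z F3.z F3.z F3.z F3.z w = F3.z := by decide
lemma sq_one : ∀ c : F, c ≠ 0 → c * c = 1 := by decide
lemma pm_one : ∀ c : F, c ≠ 0 → c = 1 ∨ c = -1 := by decide
lemma vne_neg : ∀ v : V, v ≠ 0 → v ≠ -v := by decide
lemma aux_addW1 : ∀ u : W3, addW (smulW F3.o zW) (smulW F3.z u) = zW := by decide
lemma aux_addW2 : ∀ u : W3, addW (smulW F3.z u) (smulW F3.o zW) = zW := by decide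

noncomputable def mV : V → Projectivization F V :=
  fun v => if h : v = 0 then Projectivization.mk F E0 E0_ne else Projectivization.mk F v h

lemma mV_apply (v : V) (hv : v ≠ 0) : mV v = Projectivization.mk F v hv := dif_neg hv

lemma pval_mV (q : QuadraticForm F V) (v : V) (hv : v ≠ 0) : pval q (mV v) = q v := by
  rw [mV_apply v hv]
  obtain ⟨c, hc⟩ := Projectivization.exists_smul_eq_mk_rep F v hv
  show q (Projectivization.mk F v hv).rep = q v
  rw [← hc, Units.smul_def, QuadraticMap.map_smul, smul_eq_mul,
    sq_one _ (Units.ne_zero c), one_mul]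

lemma two_mul_count (s : Set V) (h0 : (0:V) ∉ s) (hneg : ∀ v ∈ s, -v ∈ s) :
    s.ncard = 2 * (mV '' s).ncard := by
  classical
  have hfin : s.Finite := Set.toFinite s
  set sF := hfin.toFinset with hsF
  have hmem : ∀ v, v ∈ sF ↔ v ∈ s := fun v => hfin.mem_toFinset
  set tF := sF.image mV with htF
  have hcards : sF.card = ∑ X ∈ tF, (sF.filter fun v => mV v = X).card :=
    Finset.card_eq_sum_card_fiberwise (fun v hv => Finset.mem_image_of_mem mV hv)
  have hfib : ∀ X ∈ tF, (sF.filter fun v => mV v = X).card = 2 := by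
    intro X hX
    obtain ⟨w, hw, rfl⟩ := Finset.mem_image.mp hX
    have hws : w ∈ s := (hmem w).mp hw
    have hw0 : w ≠ 0 := fun hc => h0 (hc ▸ hws)
    have hset : (sF.filter fun v => mV v = mV w) = {w, -w} := by
      ext v
      simp only [Finset.mem_filter, hmem, Finset.mem_insert, Finset.mem_singleton]
      constructor
      · rintro ⟨hvs, hmv⟩
        have hv0 : v ≠ 0 := fun hc => h0 (hc ▸ hvs)
        rw [mV_apply v hv0, mV_apply w hw0, Projectivization.mk_eq_mk_iff'] at hmv
        obtain ⟨aa, ha⟩ := hmv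
        have ha0 : aa ≠ 0 := by rintro rfl; rw [zero_smul] at ha; exact hv0 ha.symm
        rcases pm_one aa ha0 with rfl | rfl
        · left; rw [← ha, one_smul]
        · right; rw [← ha, neg_smul, one_smul]
      · rintro (rfl | rfl)
        · exact ⟨hws, rfl⟩
        · refine ⟨hneg w hws, ?_⟩
          have hnw0 : -w ≠ 0 := fun hc2 => hw0 (neg_eq_zero.mp hc2)
          rw [mV_apply _ hnw0, mV_apply w hw0, Projectivization.mk_eq_mk_iff']
          exact ⟨-1, by rw [neg_smul, one_smul]⟩
    rw [hset, Finset.card_insert_of_notMem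
      (by simp only [Finset.mem_singleton]; exact vne_neg w hw0), Finset.card_singleton]
  have hsum : sF.card = 2 * tF.card := by
    rw [hcards, Finset.sum_congr rfl hfib, Finset.sum_const, smul_eq_mul, mul_comm]
  have h1 : s.ncard = sF.card := Set.ncard_eq_toFinset_card s hfin
  have h2 : (mV '' s).ncard = tF.card := by
    rw [show mV '' s = ↑tF from by rw [htF, Finset.coe_image, Set.Finite.coe_toFinset]]
    exact Set.ncard_coe_finset _
  rw [h1, h2, hsum]

lemma indB_spec {u1 u2 : W3} (h : indB u1 u2 = true) :
    ∀ s t : F3, addW (smulW s u1) (smulW t u2) = zW → s = F3.z ∧ t = F3.z := by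
  intro s t hst
  have h1 := List.all_eq_true.mp h s (mem_allF3 s)
  have h2 := List.all_eq_true.mp h1 t (mem_allF3 t)
  rw [hst] at h2
  simpa using h2

lemma indB_ne_z {u1 u2 : W3} (h : indB u1 u2 = true) : u1 ≠ zW ∧ u2 ≠ zW := by
  constructor
  · intro hc
    have := (indB_spec h F3.o F3.z (by rw [hc]; exact aux_addW1 u2)).1
    exact absurd this (by decide)
  · intro hc
    have := (indB_spec h F3.z F3.o (by rw [hc]; exact aux_addW2 u1)).2
    exact absurd this (by decide)

lemma inSpB_spec {u1 u2 w : W3} :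
    inSpB u1 u2 w = true ↔ ∃ s t : F3, w = addW (smulW s u1) (smulW t u2) := by
  constructor
  · intro h
    obtain ⟨s, _, hs⟩ := List.any_eq_true.mp h
    obtain ⟨t, _, ht⟩ := List.any_eq_true.mp hs
    exact ⟨s, t, by simpa using ht⟩
  · rintro ⟨s, t, rfl⟩
    exact List.any_eq_true.mpr ⟨s, mem_allF3 s, List.any_eq_true.mpr ⟨t, mem_allF3 t, by simp⟩⟩

lemma span_rank {u1 u2 : W3} (hind : indB u1 u2 = true) :
    Module.finrank F (Submodule.span F ({Φ u1, Φ u2} : Set V)) = 2 := by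
  have hli : LinearIndependent F ![Φ u1, Φ u2] := by
    rw [LinearIndependent.pair_iff]
    intro s t hst
    have hΦ : Φ (addW (smulW (ψ s) u1) (smulW (ψ t) u2)) = 0 := by
      rw [Phi_add, Phi_smul, Phi_smul, phi_psi, phi_psi, hst]
    have hz := Phi_inj (hΦ.trans Phi_zero.symm)
    obtain ⟨hs, ht⟩ := indB_spec hind _ _ hz
    constructor
    · rw [← phi_psi s, hs]; rfl
    · rw [← phi_psi t, ht]; rfl
  have hfr := finrank_span_eq_card hli
  rw [show Set.range ![Φ u1, Φ u2] = {Φ u1, Φ u2} from Matrix.range_cons_cons_empty _ _ _] at hfr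
  rw [hfr]
  simp

lemma mem_span_iff {u1 u2 : W3} (v : V) :
    v ∈ Submodule.span F ({Φ u1, Φ u2} : Set V) ↔ inSpB u1 u2 (Ψ v) = true := by
  rw [Submodule.mem_span_pair, inSpB_spec]
  constructor
  · rintro ⟨s, t, rfl⟩
    refine ⟨ψ s, ψ t, ?_⟩
    have hΦ : Φ (addW (smulW (ψ s) u1) (smulW (ψ t) u2)) = s • Φ u1 + t • Φ u2 := by
      rw [Phi_add, Phi_smul, Phi_smul, phi_psi, phi_psi]
    rw [← hΦ, PsiPhi]
  · rintro ⟨s, t, hst⟩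
    refine ⟨φ s, φ t, ?_⟩
    have h2 := congrArg Φ hst
    rw [PhiPsi, Phi_add, Phi_smul, Phi_smul] at h2
    exact h2.symm

lemma line_eq_image (S : Submodule F V) :
    {X : Projectivization F V | X.rep ∈ S} = mV '' ((S : Set V) \ {0}) := by
  ext X
  constructor
  · intro hX
    exact ⟨X.rep, ⟨hX, X.rep_nonzero⟩,
      by rw [mV_apply _ X.rep_nonzero, Projectivization.mk_rep]⟩
  · rintro ⟨v, ⟨hvS, hv0⟩, rfl⟩
    have hv : v ≠ 0 := hv0
    show (mV v).rep ∈ S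
    rw [mV_apply v hv]
    obtain ⟨c, hc⟩ := Projectivization.exists_smul_eq_mk_rep F v hv
    rw [← hc, Units.smul_def]
    exact S.smul_mem _ hvS

/-- If `q` is a nonzero quadratic form on `GF(3)³` and `Q₀(q)` has more than `4` points,
then `Q₀(q)` is the union of two distinct lines of `PG(2,3)`, and hence has exactly
`7` points. -/
theorem Qset_zero_eq_line_pair (q : QuadraticForm F V) (hq : q ≠ 0)
    (h : 4 < (Qset q 0).ncard) :
    (∃ g h : Set (Projectivization F V), IsLine g ∧ IsLine h ∧ g ≠ h ∧ Qset q 0 = g ∪ h) ∧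
    (Qset q 0).ncard = 7 := by
  classical
  set P : W3 → F3 := PolW (ψ (q E0)) (ψ (q E1)) (ψ (q E2))
    (ψ (QuadraticMap.polar (⇑q) E0 E1)) (ψ (QuadraticMap.polar (⇑q) E0 E2))
    (ψ (QuadraticMap.polar (⇑q) E1 E2)) with hP
  have hqv : ∀ v : V, q v = φ (P (Ψ v)) := by
    intro v
    rw [expand q v, hP, Pol_corr]
    simp only [phi_psi, PhiPsi]
  set Z : Set V := {v | v ≠ 0 ∧ q v = 0} with hZdef
  have hZ0 : (0:V) ∉ Z := fun hc => hc.1 rfl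
  have hZneg : ∀ v ∈ Z, -v ∈ Z := by
    rintro v ⟨hv0, hv⟩
    exact ⟨fun hc => hv0 (neg_eq_zero.mp hc), by rwa [QuadraticMap.map_neg]⟩
  have hQZ : Qset q 0 = mV '' Z := by
    ext X
    constructor
    · intro hX
      refine ⟨X.rep, ⟨X.rep_nonzero, hX⟩, ?_⟩
      rw [mV_apply _ X.rep_nonzero, Projectivization.mk_rep]
    · rintro ⟨v, ⟨hv0, hv⟩, rfl⟩
      show pval q (mV v) = 0
      rw [pval_mV q v hv0, hv]
  have hcount : Z.ncard = 2 * (Qset q 0).ncard := by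
    rw [hQZ]; exact two_mul_count Z hZ0 hZneg
  have hznz : ∀ v : V, v ≠ 0 ↔ Ψ v ≠ zW := by
    intro v
    constructor
    · intro hv hc; apply hv; rw [← PhiPsi v, hc, Phi_zero]
    · intro hv hc; apply hv; rw [hc, Psi_zero]
  have hZset : Z = Φ '' {w : W3 | w ≠ zW ∧ P w = F3.z} := by
    ext v
    simp only [hZdef, Set.mem_setOf_eq, Set.mem_image]
    constructor
    · rintro ⟨hv0, hv⟩
      refine ⟨Ψ v, ⟨(hznz v).mp hv0, ?_⟩, PhiPsi v⟩
      rw [hqv v] at hv; exact (phi_eq_zero _).mp hv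
    · rintro ⟨w, ⟨hw0, hw⟩, rfl⟩
      refine ⟨fun hc => hw0 (Phi_inj (hc.trans Phi_zero.symm)), ?_⟩
      rw [hqv, PsiPhi, hw]; rfl
  have hZcnt : Z.ncard = cnt P := by
    rw [hZset, Set.ncard_image_of_injective _ Phi_inj]
    have hset : {w : W3 | w ≠ zW ∧ P w = F3.z} = ↑(allW.filter fun w => P w == F3.z).toFinset := by
      ext w
      simp [List.mem_toFinset, List.mem_filter, mem_allW]
    rw [hset, Set.ncard_coe_finset, List.toFinset_card_of_nodup (allW_nodup.filter _)]
    rfl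
  have hgood : goodB (ψ (q E0)) (ψ (q E1)) (ψ (q E2)) (ψ (QuadraticMap.polar (⇑q) E0 E1))
      (ψ (QuadraticMap.polar (⇑q) E0 E2)) (ψ (QuadraticMap.polar (⇑q) E1 E2)) = true := by
    have h1 := coreBool
    simp only [goodAll, List.all_eq_true] at h1
    exact h1 _ (mem_allF3 _) _ (mem_allF3 _) _ (mem_allF3 _) _ (mem_allF3 _) _ (mem_allF3 _) _
      (mem_allF3 _)
  have h8 : 8 < cnt P := by omega
  have hnz : ¬((ψ (q E0) == F3.z && (ψ (q E1) == F3.z && (ψ (q E2) == F3.z &&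
      (ψ (QuadraticMap.polar (⇑q) E0 E1) == F3.z && (ψ (QuadraticMap.polar (⇑q) E0 E2) == F3.z &&
      ψ (QuadraticMap.polar (⇑q) E1 E2) == F3.z))))) = true) := by
    intro hall
    simp only [Bool.and_eq_true, beq_iff_eq] at hall
    obtain ⟨ha', hb', hc', hd', he', hf'⟩ := hall
    apply hq
    ext v
    rw [hqv v, hP, ha', hb', hc', hd', he', hf', PolW_zero]
    rfl
  have hC : cnt P = 14 ∧ checkB P = true := by
    unfold goodB at hgood
    rw [Bool.or_eq_true, Bool.or_eq_true] at hgood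
    rcases hgood with (hgood | hgood) | hgood
    · exact absurd (by simpa [Bool.and_assoc] using hgood) hnz
    · exfalso
      rw [Bool.not_eq_true', decide_eq_false_iff_not] at hgood
      exact hgood h8
    · rw [Bool.and_eq_true, beq_iff_eq] at hgood
      exact ⟨hgood.1, hgood.2⟩
  have hQ7 : (Qset q 0).ncard = 7 := by omega
  obtain ⟨u1, u2, w1, w2, hpk⟩ : ∃ u1 u2 w1 w2, pick P = (u1, u2, w1, w2) :=
    ⟨_, _, _, _, rfl⟩
  have hch := hC.2
  unfold checkB at hch
  rw [hpk] at hch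
  rw [Bool.and_eq_true, Bool.and_eq_true, Bool.and_eq_true] at hch
  obtain ⟨⟨⟨hind1, hind2⟩, hdist⟩, hcover⟩ := hch
  have hiff : ∀ w : W3, w ≠ zW →
      ((P w = F3.z) ↔ (inSpB u1 u2 w = true ∨ inSpB w1 w2 w = true)) := by
    intro w hw
    have h1 := List.all_eq_true.mp hcover w ((mem_allW w).mpr hw)
    rw [beq_iff_eq] at h1
    constructor
    · intro h2
      rw [← Bool.or_eq_true, ← h1, beq_iff_eq]
      exact h2
    · intro h2
      rw [← beq_iff_eq (a := P w) (b := F3.z), h1, Bool.or_eq_true]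
      exact h2
  set S : Submodule F V := Submodule.span F ({Φ u1, Φ u2} : Set V) with hS
  set T : Submodule F V := Submodule.span F ({Φ w1, Φ w2} : Set V) with hT
  have hZU : Z = (((S : Set V)) \ {0}) ∪ (((T : Set V)) \ {0}) := by
    ext v
    simp only [hZdef, Set.mem_setOf_eq, Set.mem_union, Set.mem_diff, Set.mem_singleton_iff,
      SetLike.mem_coe]
    constructor
    · rintro ⟨hv0, hv⟩
      rw [hqv v] at hv
      rcases (hiff (Ψ v) ((hznz v).mp hv0)).mp ((phi_eq_zero _).mp hv) with h1 | h1
      · exact Or.inl ⟨(mem_span_iff v).mpr h1, hv0⟩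
      · exact Or.inr ⟨(mem_span_iff v).mpr h1, hv0⟩
    · rintro (⟨hvS, hv0⟩ | ⟨hvS, hv0⟩)
      · refine ⟨hv0, ?_⟩
        have := (hiff (Ψ v) ((hznz v).mp hv0)).mpr (Or.inl ((mem_span_iff v).mp hvS))
        rw [hqv v, this]; rfl
      · refine ⟨hv0, ?_⟩
        have := (hiff (Ψ v) ((hznz v).mp hv0)).mpr (Or.inr ((mem_span_iff v).mp hvS))
        rw [hqv v, this]; rfl
  set g : Set (Projectivization F V) := {X | X.rep ∈ S} with hg
  set g' : Set (Projectivization F V) := {X | X.rep ∈ T} with hg'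
  have hcup : Qset q 0 = g ∪ g' := by
    rw [hQZ, hg, hg', line_eq_image S, line_eq_image T, ← Set.image_union, hZU]
  have hrepmem : ∀ (v : V) (hv : v ≠ 0) (U : Submodule F V), v ∈ U → (mV v).rep ∈ U := by
    intro v hv U hvU
    rw [mV_apply v hv]
    obtain ⟨c, hc⟩ := Projectivization.exists_smul_eq_mk_rep F v hv
    rw [← hc, Units.smul_def]
    exact U.smul_mem _ hvU
  have hmemrep : ∀ (v : V) (hv : v ≠ 0) (U : Submodule F V), (mV v).rep ∈ U → v ∈ U := by
    intro v hv U hvU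
    rw [mV_apply v hv] at hvU
    obtain ⟨c, hc⟩ := Projectivization.exists_smul_eq_mk_rep F v hv
    rw [← hc, Units.smul_def] at hvU
    have := U.smul_mem ((c : F)⁻¹) hvU
    rwa [inv_smul_smul₀ (Units.ne_zero c)] at this
  have hne : g ≠ g' := by
    intro hgh
    have hu1ne : Φ u1 ≠ 0 := fun hc => (indB_ne_z hind1).1 (Phi_inj (hc.trans Phi_zero.symm))
    have hu2ne : Φ u2 ≠ 0 := fun hc => (indB_ne_z hind1).2 (Phi_inj (hc.trans Phi_zero.symm))
    have hu1S : Φ u1 ∈ S := Submodule.subset_span (Set.mem_insert _ _)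
    have hu2S : Φ u2 ∈ S := Submodule.subset_span (Set.mem_insert_of_mem _ rfl)
    have hu1g : mV (Φ u1) ∈ g := hrepmem _ hu1ne S hu1S
    have hu2g : mV (Φ u2) ∈ g := hrepmem _ hu2ne S hu2S
    rw [hgh] at hu1g hu2g
    have hu1T : Φ u1 ∈ T := hmemrep _ hu1ne T hu1g
    have hu2T : Φ u2 ∈ T := hmemrep _ hu2ne T hu2g
    have h1 : inSpB w1 w2 u1 = true := by
      have := (mem_span_iff (Φ u1)).mp hu1T
      rwa [PsiPhi] at this
    have h2 : inSpB w1 w2 u2 = true := by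
      have := (mem_span_iff (Φ u2)).mp hu2T
      rwa [PsiPhi] at this
    rw [h1, h2] at hdist
    exact absurd hdist (by decide)
  exact ⟨⟨g, g', ⟨S, span_rank hind1, rfl⟩, ⟨T, span_rank hind2, rfl⟩, hne, hcup⟩, hQ7⟩
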